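/- Let λ ≠ 0 and γ1, γ2, γ3 be real numbers, and let g be the 4-dimensional real Lie algebra with basis u1,u2,u3,u4 and only nonzero brackets [u1,u2] = u1 + λ·u3, [u1,u3] = −λ·u1, [u2,u3] = λ·u2 + u3, [u1,u4] = γ1λ·u1 + γ2λ²·u3, [u2,u4] = γ3·u1 − (γ1−γ2)λ·u2 − (γ1−γ2−γ3λ)·u3, [u3,u4] = −γ3λ·u1 − γ2λ²·u2 − γ2λ·u3, equipped with the Lorentzian inner product whose only nonzero components on the basis are ⟨u1,u2⟩ = ⟨u2,u1⟩ = 1, ⟨u3,u3⟩ = 1, ⟨u4,u4⟩ = 1. Then there is no real number c for which Ric − c·Id is a derivation of g. -/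
import Mathlib


namespace Stmt16

abbrev V : Type := Fin 4 → ℝ

noncomputable def e (i : Fin 4) : V := fun j => if j = i then 1 else 0

noncomputable def br (l g1 g2 g3 : ℝ) (x y : V) : V :=
  let A := x 0 * y 3 - x 3 * y 0
  let B := x 1 * y 3 - x 3 * y 1
  let C := x 2 * y 3 - x 3 * y 2
  let P := x 0 * y 1 - x 1 * y 0
  let Q := x 0 * y 2 - x 2 * y 0
  let R := x 1 * y 2 - x 2 * y 1
  ![P - l * Q + g1 * l * A + g3 * B - g3 * l * C, l * R - (g1 - g2) * l * B - g2 * l^2 * C, l * P + R + g2 * l^2 * A - (g1 - g2 - g3 * l) * B - g2 * l * C, 0]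

noncomputable def ip (x y : V) : ℝ := x 0 * y 1 + x 1 * y 0 + x 2 * y 2 + x 3 * y 3

noncomputable def Rcurv (l g1 g2 g3 : ℝ) (nabla : V → V → V) (z x y : V) : V :=
  nabla (br l g1 g2 g3 z x) y - nabla z (nabla x y) + nabla x (nabla z y)

noncomputable def rho (l g1 g2 g3 : ℝ) (nabla : V → V → V) (x y : V) : ℝ :=
  ∑ i : Fin 4, Rcurv l g1 g2 g3 nabla (e i) x y i

noncomputable def tau (Ric : V → V) : ℝ := ∑ i : Fin 4, Ric (e i) i

def IsDeriv (l g1 g2 g3 : ℝ) (D : V → V) : Prop :=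
  ∀ x y : V, D (br l g1 g2 g3 x y) = br l g1 g2 g3 (D x) y + br l g1 g2 g3 x (D y)

noncomputable def w : Fin 4 → V := ![e 1, e 0, e 2, e 3]

noncomputable def N (l g1 g2 g3 : ℝ) (x y : V) : V := fun k =>
  (ip (br l g1 g2 g3 x y) (w k) - ip (br l g1 g2 g3 y (w k)) x
    + ip (br l g1 g2 g3 (w k) x) y) / 2

set_option maxHeartbeats 1000000 in
lemma Re0 (l g1 g2 g3 : ℝ) (k : Fin 4) :
    rho l g1 g2 g3 (N l g1 g2 g3) (e 0) (w k) =
      ![l^2/2 + l^2*g2^2/2 - l^2*g1*g2/2, 0, -(3/2)*l^3*g2^2, 0] k := by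
  fin_cases k <;>
    · simp [rho, Rcurv, N, br, ip, w, e, Fin.sum_univ_four, Matrix.vecHead, Matrix.vecTail]
      try ring

set_option maxHeartbeats 1000000 in
lemma Re1 (l g1 g2 g3 : ℝ) (k : Fin 4) :
    rho l g1 g2 g3 (N l g1 g2 g3) (e 1) (w k) =
      ![2 + g2^2/2 - g1*g2 + g1^2/2 + 2*l*g2*g3 - 3*l*g1*g3,
        l^2/2 + l^2*g2^2/2 - l^2*g1*g2/2,
        l - l*g2^2/2 + l*g1^2/2 - (5/2)*l^2*g2*g3,
        (3/2)*l*g2] k := by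
  fin_cases k <;>
    · simp [rho, Rcurv, N, br, ip, w, e, Fin.sum_univ_four, Matrix.vecHead, Matrix.vecTail]
      try ring

set_option maxHeartbeats 1000000 in
lemma Rv01_0 (l g1 g2 g3 : ℝ) :
    rho l g1 g2 g3 (N l g1 g2 g3) ![1, 0, (l:ℝ), 0] (w 0) =
      (3/2)*l^2 - l^2*g1*g2/2 + l^2*g1^2/2 - (5/2)*l^3*g2*g3 := by
  simp [rho, Rcurv, N, br, ip, w, e, Fin.sum_univ_four, Matrix.vecHead, Matrix.vecTail]
  ring

set_option maxHeartbeats 1000000 in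
lemma Rv01_2 (l g1 g2 g3 : ℝ) :
    rho l g1 g2 g3 (N l g1 g2 g3) ![1, 0, (l:ℝ), 0] (w 2) =
      l^3/2 - (5/2)*l^3*g2^2 + l^3*g1*g2 := by
  simp [rho, Rcurv, N, br, ip, w, e, Fin.sum_univ_four, Matrix.vecHead, Matrix.vecTail]
  ring

set_option maxHeartbeats 1000000 in
lemma Rv12_3 (l g1 g2 g3 : ℝ) :
    rho l g1 g2 g3 (N l g1 g2 g3) ![0, (l:ℝ), 1, 0] (w 3) = (3/2)*l^2*g2 := by
  simp [rho, Rcurv, N, br, ip, w, e, Fin.sum_univ_four, Matrix.vecHead, Matrix.vecTail]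
  ring

set_option maxHeartbeats 1000000 in
theorem stmt_16 (l g1 g2 g3 : ℝ) (hl : l ≠ 0)
    (nabla : V → V → V)
    (hKoszul : ∀ x y z : V, 2 * ip (nabla x y) z =
      ip (br l g1 g2 g3 x y) z - ip (br l g1 g2 g3 y z) x + ip (br l g1 g2 g3 z x) y)
    (Ric : V → V)
    (hRic : ∀ x y : V, ip (Ric x) y = rho l g1 g2 g3 nabla x y) :
    ¬ ∃ c : ℝ, IsDeriv l g1 g2 g3 (fun v => Ric v - c • v) := by
  have hN : nabla = N l g1 g2 g3 := by
    funext x y k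
    have h := hKoszul x y (w k)
    fin_cases k <;>
      [ (have h2 := h); (have h2 := h); (have h2 := h); (have h2 := h) ] <;>
      simp [w, N, ip, e, Matrix.vecHead, Matrix.vecTail] at h2 ⊢ <;> linarith
  subst hN
  have hr : ∀ (x : V) (k : Fin 4), Ric x k = rho l g1 g2 g3 (N l g1 g2 g3) x (w k) := by
    intro x k
    have h := hRic x (w k)
    fin_cases k <;> simp [w, ip, e, Matrix.vecHead, Matrix.vecTail] at h ⊢ <;> linarith
  have hb01 : br l g1 g2 g3 (e 0) (e 1) = ![1, 0, (l:ℝ), 0] := by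
    funext k; fin_cases k <;> simp [br, e, Matrix.vecHead, Matrix.vecTail]
  have hb12 : br l g1 g2 g3 (e 1) (e 2) = ![0, (l:ℝ), 1, 0] := by
    funext k; fin_cases k <;> simp [br, e, Matrix.vecHead, Matrix.vecTail]
  rintro ⟨c, hD⟩
  -- Equation from component 3 of the derivation identity on (e 1, e 2): gives g2 = 0
  have E1 := congrFun (hD (e 1) (e 2)) 3
  rw [hb12] at E1
  simp only [Pi.sub_apply, Pi.smul_apply, smul_eq_mul, hr, Re0, Re1, Rv12_3] at E1
  simp [br, e, ip, Matrix.vecHead, Matrix.vecTail] at E1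
  have hl2 : (0:ℝ) < l ^ 2 := by positivity
  have hg2 : g2 = 0 := E1.resolve_left hl
  subst hg2
  -- Equations from components 2 and 0 of the derivation identity on (e 0, e 1)
  have E2 := congrFun (hD (e 0) (e 1)) 2
  have E3 := congrFun (hD (e 0) (e 1)) 0
  rw [hb01] at E2 E3
  simp [br, e, ip, Pi.sub_apply, Pi.smul_apply, smul_eq_mul, Matrix.vecHead,
    Matrix.vecTail] at E2 E3
  simp only [hr, Re0, Re1, Rv01_0, Rv01_2] at E2 E3
  simp [Matrix.vecHead, Matrix.vecTail] at E2 E3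
  ring_nf at E2 E3
  -- E2 gives l*c = l^3/2, E3 gives c = -(3/2)*l^2 - l^2*g1^2
  have hc : c = -(3/2)*l^2 - l^2*g1^2 := by linarith
  have h2 : l * c = l^3/2 := by linarith
  rw [hc] at h2
  have h3 : l^3 * (2 + g1^2) = 0 := by ring_nf at h2 ⊢; linarith
  have h4 : (2 + g1^2) ≠ 0 := by positivity
  have hl3 : l^3 = 0 := by
    rcases mul_eq_zero.mp h3 with h | h
    · exact h
    · exact absurd h h4
  exact hl (by nlinarith [hl3, hl2])

end Stmt16
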